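/- arXiv:2509.00275 — 2 statements merged into one kernel-verified Lean document; each statement's English description precedes it below -/
import Mathlib

section
/- For each positive integer n there exists exactly one root x of the equation tan(x) = tanh(x) in the interval [nπ, (n+1/2)π). -/
open Real Set Filter Topology

private lemma hasDerivAt_tanh' (x : ℝ) :
    HasDerivAt Real.tanh (1 / Real.cosh x ^ 2) x := by
  have h : HasDerivAt (fun y => Real.sinh y / Real.cosh y)
      ((Real.cosh x * Real.cosh x - Real.sinh x * Real.sinh x) / Real.cosh x ^ 2) x :=
    (Real.hasDerivAt_sinh x).div (Real.hasDerivAt_cosh x) (Real.cosh_pos x).ne'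
  have heq : (Real.cosh x * Real.cosh x - Real.sinh x * Real.sinh x) / Real.cosh x ^ 2
      = 1 / Real.cosh x ^ 2 := by
    have h2 := Real.cosh_sq_sub_sinh_sq x
    rw [show Real.cosh x * Real.cosh x - Real.sinh x * Real.sinh x
        = Real.cosh x ^ 2 - Real.sinh x ^ 2 by ring, h2]
  rw [heq] at h
  convert h using 2 with y
  exact Real.tanh_eq_sinh_div_cosh y

theorem unique_root_tan_tanh (n : ℕ) (hn : 1 ≤ n) :
    ∃! x : ℝ, x ∈ Set.Ico (n * Real.pi) ((n + 1/2) * Real.pi) ∧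
      Real.tan x = Real.tanh x := by
  have hπ := Real.pi_pos
  set a : ℝ := n * Real.pi with ha
  set b : ℝ := (n + 1/2) * Real.pi with hb
  have hn1 : (1 : ℝ) ≤ n := by exact_mod_cast hn
  have hab : a < b := by rw [ha, hb]; nlinarith
  have ha0 : 0 < a := by rw [ha]; nlinarith
  -- cos ≠ 0 on Ico a b
  have hcosne : ∀ x ∈ Ico a b, Real.cos x ≠ 0 := by
    intro x hx hc
    obtain ⟨k, hk⟩ := Real.cos_eq_zero_iff.mp hc
    obtain ⟨h1, h2⟩ := hx
    rw [hk, ha] at h1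
    rw [hk, hb] at h2
    have e1 : (2 * (n : ℝ)) ≤ 2 * (k : ℝ) + 1 := by nlinarith
    have e2 : (2 * (k : ℝ) + 1) < 2 * (n : ℝ) + 1 := by nlinarith
    have i1 : (2 * (n : ℤ)) ≤ 2 * k + 1 := by exact_mod_cast e1
    have i2 : (2 * (k : ℤ) + 1) < 2 * n + 1 := by exact_mod_cast e2
    omega
  set f : ℝ → ℝ := fun x => Real.tan x - Real.tanh x with hf
  have hcont : ContinuousOn f (Ico a b) := fun x hx =>
    ((Real.continuousAt_tan.mpr (hcosne x hx)).sub
      (hasDerivAt_tanh' x).continuousAt).continuousWithinAt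
  -- strict monotonicity
  have hmono : StrictMonoOn f (Ico a b) := by
    apply strictMonoOn_of_deriv_pos (convex_Ico a b) hcont
    intro x hx
    rw [interior_Ico] at hx
    have hxI : x ∈ Ico a b := Ioo_subset_Ico_self hx
    have hd : HasDerivAt f (1 / Real.cos x ^ 2 - 1 / Real.cosh x ^ 2) x :=
      (Real.hasDerivAt_tan (hcosne x hxI)).sub (hasDerivAt_tanh' x)
    rw [hd.deriv]
    have hx0 : x ≠ 0 := by
      have : 0 < x := lt_trans ha0 hx.1
      linarith
    have hcosh1 : 1 < Real.cosh x := Real.one_lt_cosh.mpr hx0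
    have hcos2 : 0 < Real.cos x ^ 2 := by
      have := hcosne x hxI
      positivity
    have hlt : Real.cos x ^ 2 < Real.cosh x ^ 2 := by
      have h1 : Real.cos x ^ 2 ≤ 1 := Real.cos_sq_le_one x
      nlinarith
    have : 1 / Real.cosh x ^ 2 < 1 / Real.cos x ^ 2 :=
      one_div_lt_one_div_of_lt hcos2 hlt
    linarith
  -- f a < 0
  have htana : Real.tan a = 0 := by
    rw [ha, show (n : ℝ) * Real.pi = 0 + n * Real.pi by ring,
      Real.tan_add_nat_mul_pi, Real.tan_zero]
  have hfa : f a < 0 := by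
    have htanh : 0 < Real.tanh a := by
      rw [Real.tanh_eq_sinh_div_cosh]
      exact div_pos (Real.sinh_pos_iff.mpr ha0) (Real.cosh_pos a)
    simp only [hf, htana]
    linarith
  -- f tends to atTop at b⁻
  have hmap : Tendsto (fun x : ℝ => x - n * Real.pi) (𝓝[<] b) (𝓝[<] (Real.pi / 2)) := by
    rw [tendsto_nhdsWithin_iff]
    constructor
    · have : Tendsto (fun x : ℝ => x - n * Real.pi) (𝓝 b) (𝓝 (b - n * Real.pi)) :=
        (continuous_id.sub continuous_const).tendsto b
      have hbn : b - n * Real.pi = Real.pi / 2 := by rw [hb]; ring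
      rw [hbn] at this
      exact this.mono_left nhdsWithin_le_nhds
    · filter_upwards [self_mem_nhdsWithin] with x hx
      simp only [mem_Iio] at hx ⊢
      rw [hb] at hx
      linarith
  have htan : Tendsto Real.tan (𝓝[<] b) atTop := by
    have := Real.tendsto_tan_pi_div_two.comp hmap
    have heq : (Real.tan ∘ fun x : ℝ => x - n * Real.pi) = Real.tan := by
      funext x
      exact Real.tan_sub_nat_mul_pi x n
    rwa [heq] at this
  have hftop : Tendsto f (𝓝[<] b) atTop := by
    apply tendsto_atTop_mono (fun x => ?_) (tendsto_atTop_add_const_right _ (-1) htan)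
    have h1 : Real.tanh x ≤ 1 := by
      rw [Real.tanh_eq_sinh_div_cosh, div_le_one (Real.cosh_pos x)]
      have h2 : Real.cosh x - Real.sinh x = Real.exp (-x) := Real.cosh_sub_sinh x
      have := Real.exp_pos (-x)
      linarith
    simp only [hf]
    linarith
  -- pick c with f c > 0
  have hev : ∀ᶠ x in 𝓝[<] b, 0 < f x := hftop.eventually_gt_atTop 0
  have hmem : ∀ᶠ x in 𝓝[<] b, x ∈ Ioo a b :=
    Ioo_mem_nhdsLT_of_mem ⟨hab, le_refl b⟩
  obtain ⟨c, hfc, hc⟩ := (hev.and hmem).exists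
  -- IVT
  have hsub : Icc a c ⊆ Ico a b := fun y hy => ⟨hy.1, lt_of_le_of_lt hy.2 hc.2⟩
  have hivt : Set.Icc (f a) (f c) ⊆ f '' Set.Icc a c :=
    intermediate_value_Icc hc.1.le (hcont.mono hsub)
  obtain ⟨x0, hx0, hfx0⟩ := hivt ⟨hfa.le, hfc.le⟩
  refine ⟨x0, ⟨hsub hx0, ?_⟩, ?_⟩
  · have : Real.tan x0 - Real.tanh x0 = 0 := hfx0
    linarith
  · rintro y ⟨hy, hty⟩
    have hfy : f y = 0 := by simp only [hf]; linarith
    exact hmono.injOn hy (hsub hx0) (by rw [hfy, hfx0])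
end

section
/- If x_n denotes the unique root of tan(x) = tanh(x) in [nπ, (n+1/2)π), then x_n - (nπ + π/4) → 0 as n → ∞. -/
open Real Filter

lemma tanh_eq_aux (t : ℝ) :
    Real.tanh t = (1 - Real.exp (-(2*t))) / (1 + Real.exp (-(2*t))) := by
  rw [Real.tanh_eq_sinh_div_cosh, Real.sinh_eq, Real.cosh_eq]
  have h1 : Real.exp t ≠ 0 := (Real.exp_pos t).ne'
  have h2 : (0:ℝ) < Real.exp t + Real.exp (-t) :=
    add_pos (Real.exp_pos _) (Real.exp_pos _)
  have h3 : (0:ℝ) < 1 + Real.exp (-(2*t)) :=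
    add_pos one_pos (Real.exp_pos _)
  have e1 : Real.exp (-t) * Real.exp t = 1 := by
    rw [← Real.exp_add]; simp
  have e2 : Real.exp (-(2*t)) = Real.exp (-t) * Real.exp (-t) := by
    rw [← Real.exp_add]; ring_nf
  rw [div_eq_div_iff (by positivity) h3.ne', e2]
  nlinarith [e1, Real.exp_pos t, Real.exp_pos (-t)]

lemma tanh_tendsto : Tendsto Real.tanh atTop (nhds 1) := by
  have h : Tendsto (fun t : ℝ => Real.exp (-(2*t))) atTop (nhds 0) := by
    apply Real.tendsto_exp_atBot.comp
    have h2t : Tendsto (fun t : ℝ => 2 * t) atTop atTop :=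
      tendsto_id.const_mul_atTop two_pos
    exact tendsto_neg_atTop_atBot.comp h2t |>.congr (fun t => rfl)
  have := (((tendsto_const_nhds (x := (1:ℝ)) (f := atTop (α := ℝ))).sub h).div ((tendsto_const_nhds (x := (1:ℝ))).add h) (by norm_num : (1:ℝ) + 0 ≠ 0))
  simp only [sub_zero, add_zero, div_one] at this
  exact this.congr (fun t => (tanh_eq_aux t).symm)

theorem root_asymptotics (x : ℕ → ℝ)
    (hx : ∀ n : ℕ, 1 ≤ n →
      x n ∈ Set.Ico (n * Real.pi) ((n + 1/2) * Real.pi) ∧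
      Real.cos (x n) * Real.sinh (x n) = Real.sin (x n) * Real.cosh (x n)) :
    Filter.Tendsto (fun n : ℕ => x n - (n * Real.pi + Real.pi / 4))
      Filter.atTop (nhds 0) := by
  -- x n → ∞
  have hxtop : Tendsto x atTop atTop := by
    apply tendsto_atTop_mono' atTop (f₁ := fun n : ℕ => (n : ℝ) * Real.pi)
    · filter_upwards [eventually_ge_atTop 1] with n hn
      exact (hx n hn).1.1
    · exact Tendsto.atTop_mul_const Real.pi_pos tendsto_natCast_atTop_atTop
  -- key identity
  have key : ∀ n : ℕ, 1 ≤ n →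
      x n - (n * Real.pi + Real.pi / 4)
        = Real.arctan (Real.tanh (x n)) - Real.pi / 4 := by
    intro n hn
    obtain ⟨⟨h1, h2⟩, heq⟩ := hx n hn
    set y := x n - n * Real.pi with hy
    have hy0 : 0 ≤ y := by simp [hy]; linarith
    have hy2 : y < Real.pi / 2 := by
      have : x n < n * Real.pi + Real.pi / 2 := by
        have := h2; push_cast at this ⊢; nlinarith [Real.pi_pos]
      simp [hy]; linarith
    have hcosy : 0 < Real.cos y :=
      Real.cos_pos_of_mem_Ioo ⟨by linarith [Real.pi_pos, hy0], hy2⟩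
    have hxn : x n = y + n * Real.pi := by rw [hy]; ring
    have hcos : Real.cos (x n) ≠ 0 := by
      rw [hxn]
      rw [Real.cos_add_nat_mul_pi]
      positivity
    have htan : Real.tan y = Real.tanh (x n) := by
      have h4 : Real.tan (x n) = Real.tanh (x n) := by
        rw [Real.tan_eq_sin_div_cos, Real.tanh_eq_sinh_div_cosh]
        rw [div_eq_div_iff hcos (Real.cosh_pos _).ne']
        linarith [heq]
      rw [← h4, hxn]
      exact ((Real.tan_periodic.nat_mul n) y).symm
    have harct : Real.arctan (Real.tanh (x n)) = y := by
      rw [← htan]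
      exact Real.arctan_tan (by linarith [Real.pi_pos]) hy2
    rw [harct, hy]; ring
  have h1 : Tendsto (fun n : ℕ => Real.arctan (Real.tanh (x n)) - Real.pi / 4)
      atTop (nhds 0) := by
    have : Tendsto (fun n : ℕ => Real.arctan (Real.tanh (x n)))
        atTop (nhds (Real.pi / 4)) := by
      rw [← Real.arctan_one]
      exact (Real.continuous_arctan.continuousAt.tendsto).comp
        (tanh_tendsto.comp hxtop)
    have h0 := this.sub (tendsto_const_nhds (x := Real.pi / 4) (f := atTop (α := ℕ)))
    simpa using h0
  apply h1.congr'
  filter_upwards [eventually_ge_atTop 1] with n hn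
  exact (key n hn).symm
end
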